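/- arXiv:2206.14666 — 2 statements merged into one kernel-verified Lean document; each statement's English description precedes it below -/
import Mathlib

section
/- Let (Ω, 𝔉, P) be a probability space, α ∈ (0,1), and let X, Y be integrable real-valued random variables. Then the conditional value-at-risk is subadditive: CVaR_α(X + Y) ≤ CVaR_α(X) + CVaR_α(Y). -/
open MeasureTheory

/-- Value-at-risk at level `α` of the loss `X`: the `α`-quantile
`VaR_α(X) = inf {x : P(X ≤ x) ≥ α}`. -/
noncomputable def VaR {Ω : Type*} [MeasurableSpace Ω] (P : Measure Ω) (X : Ω → ℝ) (α : ℝ) : ℝ :=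
  sInf {x : ℝ | α ≤ (P {ω | X ω ≤ x}).toReal}

/-- Conditional value-at-risk: `CVaR_α(X) = (1-α)⁻¹ ∫_α^1 VaR_u(X) du`. -/
noncomputable def CVaR {Ω : Type*} [MeasurableSpace Ω] (P : Measure Ω) (X : Ω → ℝ) (α : ℝ) : ℝ :=
  (1 - α)⁻¹ * ∫ u in α..1, VaR P X u

/-!
The quantile function `u ↦ VaR_u(X)`, restricted to `(0, 1)`, pushes Lebesgue measure forward to
the law of `X`. Hence `∫_α^1 VaR_u(X) du ≤ (1 - α) z + E[(X - z)⁺]` for every `z`, with equality at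
`z = VaR_α(X)`: as `u ↦ VaR_u(X)` is nondecreasing, `VaR_u(X) - z` is nonnegative for `u > α` and
nonpositive for `u ≤ α` (Rockafellar–Uryasev).
Applying the inequality to `X + Y` at `z = VaR_α(X) + VaR_α(Y)` and using
`(x + y - a - b)⁺ ≤ (x - a)⁺ + (y - b)⁺` gives subadditivity.
-/

open ProbabilityTheory Set Filter

/-- Only the values on `(0, 1)` are meaningful: elsewhere the set is empty or unbounded below and
`sInf` returns `0`. -/
noncomputable def quantile (μ : Measure ℝ) (u : ℝ) : ℝ :=
  sInf {x | u ≤ cdf μ x}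

section Quantile

variable {μ : Measure ℝ}

lemma bddBelow_setOf_le_cdf {u : ℝ} (hu : 0 < u) : BddBelow {x | u ≤ cdf μ x} := by
  obtain ⟨x₀, hx₀⟩ := eventually_atBot.mp ((tendsto_cdf_atBot μ).eventually (eventually_lt_nhds hu))
  exact ⟨x₀, fun x hx => le_of_not_ge fun hxx₀ => (hx₀ x hxx₀).not_ge hx⟩

lemma nonempty_setOf_le_cdf {u : ℝ} (hu : u < 1) : {x | u ≤ cdf μ x}.Nonempty :=
  ((tendsto_cdf_atTop μ).eventually (eventually_ge_nhds hu)).exists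

lemma le_cdf_quantile {u : ℝ} (hu : u ∈ Ioo 0 1) : u ≤ cdf μ (quantile μ u) := by
  have hS := bddBelow_setOf_le_cdf (μ := μ) hu.1
  refine ge_of_tendsto (((cdf μ).right_continuous _).mono Ioi_subset_Ici_self) ?_
  filter_upwards [self_mem_nhdsWithin] with y hy
  obtain ⟨x, hx, hxy⟩ := (csInf_lt_iff hS (nonempty_setOf_le_cdf hu.2)).mp hy
  exact hx.trans ((cdf μ).mono hxy.le)

lemma quantile_le_iff {u : ℝ} (hu : u ∈ Ioo 0 1) {z : ℝ} : quantile μ u ≤ z ↔ u ≤ cdf μ z :=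
  ⟨fun h => (le_cdf_quantile hu).trans ((cdf μ).mono h),
    fun h => csInf_le (bddBelow_setOf_le_cdf hu.1) h⟩

lemma monotoneOn_quantile : MonotoneOn (quantile μ) (Ioo 0 1) := fun _ hu _ hv huv =>
  (quantile_le_iff hu).mpr (huv.trans (le_cdf_quantile hv))

lemma aemeasurable_quantile : AEMeasurable (quantile μ) (volume.restrict (Ioo 0 1)) :=
  aemeasurable_restrict_of_monotoneOn measurableSet_Ioo monotoneOn_quantile

lemma map_quantile [IsProbabilityMeasure μ] : (volume.restrict (Ioo 0 1)).map (quantile μ) = μ := by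
  refine Measure.ext_of_Iic _ _ fun z => ?_
  have hpre : quantile μ ⁻¹' Iic z ∩ Ioo 0 1 = Iic (cdf μ z) ∩ Ioo 0 1 := by
    ext u
    simp only [mem_inter_iff, mem_preimage, mem_Iic]
    exact ⟨fun ⟨h, hu⟩ => ⟨(quantile_le_iff hu).mp h, hu⟩,
      fun ⟨h, hu⟩ => ⟨(quantile_le_iff hu).mpr h, hu⟩⟩
  rw [Measure.map_apply_of_aemeasurable aemeasurable_quantile measurableSet_Iic,
    Measure.restrict_apply' measurableSet_Ioo, hpre, ← Measure.restrict_apply' measurableSet_Ioo,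
    Measure.restrict_congr_set Ioo_ae_eq_Ioc, Measure.restrict_apply measurableSet_Iic,
    Iic_inter_Ioc_of_le (cdf_le_one μ z), Real.volume_Ioc, sub_zero, ofReal_cdf]

variable [IsProbabilityMeasure μ]

lemma integral_comp_quantile {g : ℝ → ℝ} (hg : AEStronglyMeasurable g μ) :
    ∫ u in Ioo 0 1, g (quantile μ u) = ∫ x, g x ∂μ := by
  rw [← integral_map aemeasurable_quantile (by rwa [map_quantile]), map_quantile]

lemma integrableOn_comp_quantile {g : ℝ → ℝ} (hg : Integrable g μ) :
    IntegrableOn (fun u => g (quantile μ u)) (Ioo 0 1) :=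
  (map_quantile (μ := μ) ▸ hg).comp_aemeasurable aemeasurable_quantile

lemma integrableOn_quantile (hμ : Integrable id μ) : IntegrableOn (quantile μ) (Ioo 0 1) :=
  integrableOn_comp_quantile hμ

lemma setIntegral_quantile_le (hμ : Integrable id μ) {α : ℝ} (h0 : 0 ≤ α) (h1 : α ≤ 1) (z : ℝ) :
    ∫ u in Ioo α 1, quantile μ u ≤ (1 - α) * z + ∫ x, max (x - z) 0 ∂μ := by
  have hsub : Ioo α 1 ⊆ Ioo 0 1 := Ioo_subset_Ioo_left h0
  have hexcess : IntegrableOn (fun u => max (quantile μ u - z) 0) (Ioo 0 1) :=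
    integrableOn_comp_quantile (g := fun x => max (x - z) 0) (hμ.sub (integrable_const z)).pos_part
  calc ∫ u in Ioo α 1, quantile μ u
      ≤ ∫ u in Ioo α 1, (z + max (quantile μ u - z) 0) :=
        setIntegral_mono_on ((integrableOn_quantile hμ).mono_set hsub)
          ((integrableOn_const measure_Ioo_lt_top.ne).add (hexcess.mono_set hsub))
          measurableSet_Ioo fun u _ => by linarith [le_max_left (quantile μ u - z) 0]
    _ = (1 - α) * z + ∫ u in Ioo α 1, max (quantile μ u - z) 0 := by
        rw [integral_add (integrableOn_const (C := z) measure_Ioo_lt_top.ne)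
            (hexcess.mono_set hsub),
          setIntegral_const, Real.volume_real_Ioo_of_le h1, smul_eq_mul]
    _ ≤ (1 - α) * z + ∫ u in Ioo 0 1, max (quantile μ u - z) 0 :=
        add_le_add le_rfl (setIntegral_mono_set hexcess (ae_of_all _ fun _ => le_max_right _ _)
          hsub.eventuallyLE)
    _ = (1 - α) * z + ∫ x, max (x - z) 0 ∂μ := by
        rw [integral_comp_quantile (g := fun x => max (x - z) 0) (by fun_prop)]

lemma setIntegral_quantile_eq (hμ : Integrable id μ) {α : ℝ} (hα : α ∈ Ioo 0 1) :
    ∫ u in Ioo α 1, quantile μ u = (1 - α) * quantile μ α + ∫ x, max (x - quantile μ α) 0 ∂μ := by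
  set a := quantile μ α
  have hsub : Ioo α 1 ⊆ Ioo 0 1 := Ioo_subset_Ioo_left hα.1.le
  have hexcess : IntegrableOn (fun u => max (quantile μ u - a) 0) (Ioo 0 1) :=
    integrableOn_comp_quantile (g := fun x => max (x - a) 0) (hμ.sub (integrable_const a)).pos_part
  have hsplit : Ioc 0 α ∪ Ioo α 1 = Ioo 0 1 := Ioc_union_Ioo_eq_Ioo hα.1.le hα.2
  have hbelow : ∫ u in Ioc 0 α, max (quantile μ u - a) 0 = 0 :=
    setIntegral_eq_zero_of_forall_eq_zero fun u hu => max_eq_right (sub_nonpos.mpr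
      (monotoneOn_quantile ⟨hu.1, hu.2.trans_lt hα.2⟩ hα hu.2))
  have habove : ∀ u ∈ Ioo α 1, max (quantile μ u - a) 0 = quantile μ u - a := fun u hu =>
    max_eq_left (sub_nonneg.mpr (monotoneOn_quantile hα (hsub hu) hu.1.le))
  rw [← integral_comp_quantile (g := fun x => max (x - a) 0) (by fun_prop), ← hsplit,
    setIntegral_union (Ioc_disjoint_Ioi_same.mono_right Ioo_subset_Ioi_self) measurableSet_Ioo
      (hexcess.mono_set (hsplit ▸ subset_union_left))
      (hexcess.mono_set (hsplit ▸ subset_union_right)),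
    hbelow, zero_add, setIntegral_congr_fun measurableSet_Ioo habove,
    integral_sub ((integrableOn_quantile hμ).mono_set hsub)
      (integrableOn_const (C := a) measure_Ioo_lt_top.ne),
    setIntegral_const, Real.volume_real_Ioo_of_le hα.2.le, smul_eq_mul]
  ring

end Quantile

lemma integral_max_add_le {Ω : Type*} [MeasurableSpace Ω] {μ : Measure Ω} {f g : Ω → ℝ}
    (hf : Integrable f μ) (hg : Integrable g μ) :
    ∫ ω, max (f ω + g ω) 0 ∂μ ≤ ∫ ω, max (f ω) 0 ∂μ + ∫ ω, max (g ω) 0 ∂μ := by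
  rw [← integral_add hf.pos_part hg.pos_part]
  exact integral_mono (hf.add hg).pos_part (hf.pos_part.add hg.pos_part) fun ω =>
    max_le (add_le_add (le_max_left _ _) (le_max_left _ _))
      (add_nonneg (le_max_right _ _) (le_max_right _ _))

section RockafellarUryasev

variable {Ω : Type*} [MeasurableSpace Ω] {P : Measure Ω} [IsProbabilityMeasure P] {X : Ω → ℝ}
  {α : ℝ}

lemma VaR_eq_quantile_map (hX : AEMeasurable X P) : VaR P X = quantile (P.map X) := by
  have := Measure.isProbabilityMeasure_map (μ := P) hX
  ext u
  simp only [VaR, quantile, cdf_eq_real, measureReal_def,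
    Measure.map_apply_of_aemeasurable hX measurableSet_Iic]
  rfl

lemma CVaR_eq_setIntegral_quantile (hX : AEMeasurable X P) (hα : α ≤ 1) :
    CVaR P X α = (1 - α)⁻¹ * ∫ u in Ioo α 1, quantile (P.map X) u := by
  rw [CVaR, intervalIntegral.integral_of_le hα, integral_Ioc_eq_integral_Ioo,
    VaR_eq_quantile_map hX]

lemma CVaR_le_add_integral_max (hX : Integrable X P) (h0 : 0 ≤ α) (h1 : α < 1) (z : ℝ) :
    CVaR P X α ≤ z + (1 - α)⁻¹ * ∫ ω, max (X ω - z) 0 ∂P := by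
  have := Measure.isProbabilityMeasure_map (μ := P) hX.aemeasurable
  have hpos : 0 < 1 - α := sub_pos.mpr h1
  rw [CVaR_eq_setIntegral_quantile hX.aemeasurable h1.le,
    ← integral_map hX.aemeasurable (f := fun x => max (x - z) 0) (by fun_prop),
    inv_mul_le_iff₀ hpos, mul_add, mul_inv_cancel_left₀ hpos.ne']
  exact setIntegral_quantile_le ((integrable_map_measure (by fun_prop) hX.aemeasurable).mpr hX)
    h0 h1.le z

lemma CVaR_eq_VaR_add_integral_max (hX : Integrable X P) (hα : α ∈ Ioo 0 1) :
    CVaR P X α = VaR P X α + (1 - α)⁻¹ * ∫ ω, max (X ω - VaR P X α) 0 ∂P := by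
  have := Measure.isProbabilityMeasure_map (μ := P) hX.aemeasurable
  have hpos : 0 < 1 - α := sub_pos.mpr hα.2
  rw [CVaR_eq_setIntegral_quantile hX.aemeasurable hα.2.le, VaR_eq_quantile_map hX.aemeasurable,
    ← integral_map hX.aemeasurable (f := fun x => max (x - quantile (P.map X) α) 0) (by fun_prop),
    setIntegral_quantile_eq ((integrable_map_measure (by fun_prop) hX.aemeasurable).mpr hX) hα,
    mul_add, inv_mul_cancel_left₀ hpos.ne']

end RockafellarUryasev

theorem CVaR_subadditive_general {Ω : Type*} [MeasurableSpace Ω] (P : Measure Ω)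
    [IsProbabilityMeasure P] (α : ℝ) (hα : α ∈ Set.Ioo (0:ℝ) 1)
    (X Y : Ω → ℝ)
    (hX : Integrable X P) (hY : Integrable Y P) :
    CVaR P (fun ω => X ω + Y ω) α ≤ CVaR P X α + CVaR P Y α := by
  set a := VaR P X α
  set b := VaR P Y α
  have hc : 0 ≤ (1 - α)⁻¹ := inv_nonneg.mpr (sub_nonneg.mpr hα.2.le)
  have hexcess : ∫ ω, max (X ω + Y ω - (a + b)) 0 ∂P
      ≤ ∫ ω, max (X ω - a) 0 ∂P + ∫ ω, max (Y ω - b) 0 ∂P := by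
    simpa only [Pi.sub_apply, add_sub_add_comm] using
      integral_max_add_le (hX.sub (integrable_const a)) (hY.sub (integrable_const b))
  calc CVaR P (fun ω => X ω + Y ω) α
      ≤ a + b + (1 - α)⁻¹ * ∫ ω, max (X ω + Y ω - (a + b)) 0 ∂P :=
        CVaR_le_add_integral_max (hX.add hY) hα.1.le hα.2 (a + b)
    _ ≤ a + b + (1 - α)⁻¹ * (∫ ω, max (X ω - a) 0 ∂P + ∫ ω, max (Y ω - b) 0 ∂P) :=
        add_le_add le_rfl (mul_le_mul_of_nonneg_left hexcess hc)
    _ = CVaR P X α + CVaR P Y α := by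
        rw [CVaR_eq_VaR_add_integral_max hX hα, CVaR_eq_VaR_add_integral_max hY hα]
        ring

/-- Subadditivity of the conditional value-at-risk. -/
theorem CVaR_subadditive {Ω : Type*} [MeasurableSpace Ω] (P : Measure Ω)
    [IsProbabilityMeasure P] (α : ℝ) (hα : α ∈ Set.Ioo (0:ℝ) 1)
    (X Y : Ω → ℝ) (hXm : Measurable X) (hYm : Measurable Y)
    (hX : Integrable X P) (hY : Integrable Y P) :
    CVaR P (fun ω => X ω + Y ω) α ≤ CVaR P X α + CVaR P Y α :=
  CVaR_subadditive_general P α hα X Y hX hY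
end

section
/- Let α ∈ (0,1) and let Y be an integrable real-valued random variable with a unique α-quantile. Let G₂ : ℝ → ℝ be convex with subgradient G₂′ and let G₁ : ℝ → ℝ be such that for every 𝔞₂ ∈ ℝ the map x ↦ G₁(x) − (x/(1−α)) G₂′(𝔞₂) is increasing, and assume E|G₁(Y)| < ∞ and E|G₂(Y)| < ∞. Define, for 𝔞₁ ≤ 𝔞₂, the scoring function S(𝔞₁, 𝔞₂, y) := (1{y ≤ 𝔞₁} − α)(G₁(𝔞₁) − G₁(y)) − G₂(𝔞₂) + G₂(y) + G₂′(𝔞₂)[ 𝔞₂ + (1/(1−α))( (1{y > 𝔞₁} − (1−α)) 𝔞₁ − 1{y > 𝔞₁} y ) ]. Then S is consistent for the pair (VaR_α, CVaR_α): E[S(VaR_α(Y), CVaR_α(Y), Y)] ≤ E[S(𝔞₁, 𝔞₂, Y)] for all (𝔞₁, 𝔞₂) ∈ ℝ² with 𝔞₁ ≤ 𝔞₂. -/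
/-!
For fixed `a₂`, the score is the generalized piecewise linear score of the increasing function
`x ↦ G₁ x - x G₂'(a₂) / (1 - α)` at `a₁`, plus terms free of `a₁`, so its expectation is minimised
in `a₁` by any `α`-quantile, in particular by `VaR_α(Y)`. For fixed `a₁`, the expected score is
`G₂(a₂) + G₂'(a₂) (m - a₂)` subtracted from terms free of `a₂`, where `m = a₁ + E(Y - a₁)⁺ / (1 - α)`;
by the subgradient inequality it is minimised at `a₂ = m`. For `a₁ = VaR_α(Y)` this `m` is
`CVaR_α(Y)`: by Tonelli, `∫_α^1 (VaR_u - VaR_α) du` and `E(Y - VaR_α)⁺` are both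
`∫_{VaR_α}^∞ P(Y > t) dt`.
-/

open MeasureTheory

/-- `q` is an `α`-quantile of `Y`: `P(Y < q) ≤ α ≤ P(Y ≤ q)`. -/
def IsQuantile {Ω : Type*} [MeasurableSpace Ω] (P : Measure Ω) (Y : Ω → ℝ) (α q : ℝ) : Prop :=
  (P {ω | Y ω < q}).toReal ≤ α ∧ α ≤ (P {ω | Y ω ≤ q}).toReal

open ProbabilityTheory Set Filter Topology

lemma lintegral_ofReal_max_sub_eq {Ω : Type*} [MeasurableSpace Ω] (μ : Measure Ω) {Y : Ω → ℝ}
    (hY : Measurable Y) (q : ℝ) :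
    ∫⁻ ω, ENNReal.ofReal (max (Y ω - q) 0) ∂μ = ∫⁻ t in Ioi q, μ {ω | t < Y ω} := by
  rw [lintegral_eq_lintegral_meas_lt (f := fun ω => max (Y ω - q) 0) μ
    (ae_of_all _ fun _ => le_max_right _ _) ((hY.sub_const q).max measurable_const).aemeasurable]
  have hshift := (measurePreserving_add_right volume q).setLIntegral_comp_preimage_emb
    (measurableEmbedding_addRight q) (fun t => μ {ω | t < Y ω}) (Ioi q)
  rw [preimage_add_const_Ioi, sub_self] at hshift
  rw [← hshift]
  refine setLIntegral_congr_fun measurableSet_Ioi fun s hs => ?_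
  simp only [lt_max_iff, lt_sub_iff_add_lt, or_iff_left (not_lt.2 (le_of_lt (mem_Ioi.1 hs)))]

section ValueAtRisk

variable {Ω : Type*} [MeasurableSpace Ω] {P : Measure Ω} [IsProbabilityMeasure P] {Y : Ω → ℝ}

lemma ofReal_cdf_map (hY : Measurable Y) (x : ℝ) :
    ENNReal.ofReal (cdf (P.map Y) x) = P {ω | Y ω ≤ x} := by
  have := Measure.isProbabilityMeasure_map (μ := P) hY.aemeasurable
  rw [ofReal_cdf, Measure.map_apply hY measurableSet_Iic]
  rfl

lemma toReal_measure_le_eq_cdf (hY : Measurable Y) (x : ℝ) :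
    (P {ω | Y ω ≤ x}).toReal = cdf (P.map Y) x := by
  rw [← ofReal_cdf_map hY, ENNReal.toReal_ofReal (cdf_nonneg _ _)]

lemma measure_lt_eq_ofReal_one_sub_cdf (hY : Measurable Y) (x : ℝ) :
    P {ω | x < Y ω} = ENNReal.ofReal (1 - cdf (P.map Y) x) := by
  have hcompl : {ω | x < Y ω} = {ω | Y ω ≤ x}ᶜ := by ext; simp
  rw [hcompl, prob_compl_eq_one_sub (measurableSet_le hY measurable_const), ← ofReal_cdf_map hY,
    ENNReal.ofReal_sub _ (cdf_nonneg _ _), ENNReal.ofReal_one]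

lemma VaR_le_iff (hY : Measurable Y) {u : ℝ} (hu : u ∈ Ioo 0 1) (t : ℝ) :
    VaR P Y u ≤ t ↔ u ≤ cdf (P.map Y) t := by
  set F := cdf (P.map Y)
  have hVaR : VaR P Y u = sInf {x | u ≤ F x} := by
    simp only [VaR, toReal_measure_le_eq_cdf hY, F]
  have hne : {x | u ≤ F x}.Nonempty :=
    ((tendsto_cdf_atTop _).eventually (eventually_ge_nhds hu.2)).exists
  obtain ⟨x₀, hx₀⟩ := ((tendsto_cdf_atBot _).eventually (eventually_lt_nhds hu.1)).exists
  have hbdd : BddBelow {x | u ≤ F x} :=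
    ⟨x₀, fun x hx => le_of_not_ge fun hxx₀ => (hx.trans (monotone_cdf _ hxx₀)).not_gt hx₀⟩
  refine ⟨fun h => ?_, fun h => hVaR ▸ csInf_le hbdd h⟩
  by_contra! hlt
  -- right-continuity of `F` at `t` yields `x > t` with `F x < u`, contradicting `VaR ≤ t`
  obtain ⟨x, hFx, htx⟩ := (((F.right_continuous t).mono Ioi_subset_Ici_self).eventually
    (eventually_lt_nhds hlt) |>.and self_mem_nhdsWithin).exists
  obtain ⟨y, hy, hyx⟩ := exists_lt_of_csInf_lt hne ((hVaR ▸ h).trans_lt htx)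
  exact (hy.trans (monotone_cdf _ hyx.le)).not_gt hFx

lemma lt_VaR_iff (hY : Measurable Y) {u : ℝ} (hu : u ∈ Ioo 0 1) (t : ℝ) :
    t < VaR P Y u ↔ cdf (P.map Y) t < u :=
  lt_iff_lt_of_le_iff_le (VaR_le_iff hY hu t)

lemma isQuantile_VaR (hY : Measurable Y) {α : ℝ} (hα : α ∈ Ioo 0 1) :
    IsQuantile P Y α (VaR P Y α) := by
  have := Measure.isProbabilityMeasure_map (μ := P) hY.aemeasurable
  set F := cdf (P.map Y)
  have hIio : P {ω | Y ω < VaR P Y α} = ENNReal.ofReal (Function.leftLim F (VaR P Y α)) := by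
    rw [← sub_zero (Function.leftLim F _), ← F.measure_Iio (tendsto_cdf_atBot _), measure_cdf,
      Measure.map_apply hY measurableSet_Iio]
    rfl
  have hleftLim : Function.leftLim F (VaR P Y α) ≤ α :=
    le_of_tendsto ((monotone_cdf _).tendsto_leftLim _) <|
      eventually_nhdsWithin_of_forall fun t ht => ((lt_VaR_iff hY hα t).1 ht).le
  constructor
  · rw [hIio, ENNReal.toReal_ofReal']
    exact max_le hleftLim hα.1.le
  · rw [toReal_measure_le_eq_cdf hY]
    exact (VaR_le_iff hY hα _).1 le_rfl

lemma monotoneOn_VaR (hY : Measurable Y) : MonotoneOn (VaR P Y) (Ioo 0 1) :=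
  fun _ hu _ hv huv => (VaR_le_iff hY hu _).2 (huv.trans ((VaR_le_iff hY hv _).1 le_rfl))

lemma lintegral_VaR_sub_VaR (hY : Measurable Y) {α : ℝ} (hα : α ∈ Ioo 0 1) :
    ∫⁻ u in Ioo α 1, ENNReal.ofReal (VaR P Y u - VaR P Y α)
      = ∫⁻ t in Ioi (VaR P Y α), P {ω | t < Y ω} := by
  set q := VaR P Y α
  set F := cdf (P.map Y)
  -- both sides are the area of `{(u, t) | α < u < 1, VaR_α < t < VaR_u}`, sliced in two ways
  set A : Set (ℝ × ℝ) := {p | p.1 ∈ Ioo α 1 ∧ q < p.2 ∧ F p.2 < p.1}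
  have hA : MeasurableSet A := measurableSet_Ioo.preimage measurable_fst |>.inter <|
    (measurableSet_lt measurable_const measurable_snd).inter
      (measurableSet_lt ((monotone_cdf _).measurable.comp measurable_snd) measurable_fst)
  rw [← lintegral_indicator measurableSet_Ioo, ← lintegral_indicator measurableSet_Ioi]
  calc ∫⁻ u, (Ioo α 1).indicator (fun u => ENNReal.ofReal (VaR P Y u - q)) u
      = ∫⁻ u, volume (Prod.mk u ⁻¹' A) := lintegral_congr fun u => ?_
    _ = ∫⁻ t, volume ((fun u => (u, t)) ⁻¹' A) := by
      rw [← Measure.prod_apply hA, Measure.prod_apply_symm hA]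
    _ = ∫⁻ t, (Ioi q).indicator (fun t => P {ω | t < Y ω}) t := lintegral_congr fun t => ?_
  · by_cases hu : u ∈ Ioo α 1
    · have hu' : u ∈ Ioo 0 1 := ⟨hα.1.trans hu.1, hu.2⟩
      have hslice : Prod.mk u ⁻¹' A = Ioo q (VaR P Y u) := by
        ext t
        exact (and_iff_right hu).trans (and_congr_right fun _ => (lt_VaR_iff hY hu' t).symm)
      rw [indicator_of_mem hu, hslice, Real.volume_Ioo]
    · have hslice : Prod.mk u ⁻¹' A = ∅ := eq_empty_of_forall_notMem fun _ ht => hu ht.1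
      rw [indicator_of_notMem hu, hslice, measure_empty]
  · by_cases ht : t ∈ Ioi q
    · have hFt : α ≤ F t := (VaR_le_iff hY hα t).1 (le_of_lt ht)
      have hslice : (fun u => (u, t)) ⁻¹' A = Ioo (F t) 1 := by
        ext u
        exact ⟨fun h => ⟨h.2.2, h.1.2⟩, fun h => ⟨⟨hFt.trans_lt h.1, h.2⟩, ht, h.1⟩⟩
      rw [indicator_of_mem ht, hslice, Real.volume_Ioo, measure_lt_eq_ofReal_one_sub_cdf hY]
    · have hslice : (fun u => (u, t)) ⁻¹' A = ∅ := eq_empty_of_forall_notMem fun _ hu => ht hu.2.1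
      rw [indicator_of_notMem ht, hslice, measure_empty]

lemma intervalIntegral_VaR (hY : Measurable Y) (hYi : Integrable Y P) {α : ℝ}
    (hα : α ∈ Ioo 0 1) :
    ∫ u in α..1, VaR P Y u = ∫ ω, max (Y ω - VaR P Y α) 0 ∂P + (1 - α) * VaR P Y α := by
  set q := VaR P Y α
  have hmeas : AEStronglyMeasurable (fun u => VaR P Y u - q) (volume.restrict (Ioo α 1)) :=
    ((aemeasurable_restrict_of_monotoneOn measurableSet_Ioo
      ((monotoneOn_VaR hY).mono (Ioo_subset_Ioo_left hα.1.le))).sub_const q).aestronglyMeasurable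
  have hnn : 0 ≤ᵐ[volume.restrict (Ioo α 1)] fun u => VaR P Y u - q :=
    ae_restrict_of_forall_mem measurableSet_Ioo fun u hu => sub_nonneg.2 <|
      monotoneOn_VaR hY hα ⟨hα.1.trans hu.1, hu.2⟩ hu.1.le
  have hlintegral : ∫⁻ u in Ioo α 1, ENNReal.ofReal (VaR P Y u - q)
      = ∫⁻ ω, ENNReal.ofReal (max (Y ω - q) 0) ∂P := by
    rw [lintegral_VaR_sub_VaR hY hα, lintegral_ofReal_max_sub_eq P hY]
  have hint : IntegrableOn (fun u => VaR P Y u - q) (Ioo α 1) :=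
    ⟨hmeas, by
      rw [hasFiniteIntegral_iff_ofReal hnn, hlintegral]
      exact (hYi.sub (integrable_const q)).pos_part.lintegral_lt_top⟩
  have hval : ∫ u in Ioo α 1, (VaR P Y u - q) = ∫ ω, max (Y ω - q) 0 ∂P := by
    rw [integral_eq_lintegral_of_nonneg_ae hnn hmeas, hlintegral,
      integral_eq_lintegral_of_nonneg_ae (f := fun ω => max (Y ω - q) 0)
        (ae_of_all _ fun _ => le_max_right _ _)
        ((hY.sub_const q).max measurable_const).aestronglyMeasurable]
  calc ∫ u in α..1, VaR P Y u = ∫ u in Ioo α 1, ((VaR P Y u - q) + q) := by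
        simp [intervalIntegral.integral_of_le hα.2.le, integral_Ioc_eq_integral_Ioo]
    _ = _ := by
      rw [integral_add hint (integrableOn_const measure_Ioo_lt_top.ne), hval, setIntegral_const,
        Real.volume_real_Ioo_of_le hα.2.le, smul_eq_mul]

lemma CVaR_eq (hY : Measurable Y) (hYi : Integrable Y P) {α : ℝ} (hα : α ∈ Ioo 0 1) :
    CVaR P Y α = VaR P Y α + (1 - α)⁻¹ * ∫ ω, max (Y ω - VaR P Y α) 0 ∂P := by
  have : 1 - α ≠ 0 := sub_ne_zero.2 hα.2.ne'
  rw [CVaR, intervalIntegral_VaR hY hYi hα]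
  field_simp
  ring

end ValueAtRisk

lemma ite_sub_mul_eq_indicator_sub {Ω : Type*} {p : Ω → Prop} [DecidablePred p] (α : ℝ)
    (f : Ω → ℝ) (ω : Ω) :
    ((if p ω then 1 else 0) - α) * f ω = {ω | p ω}.indicator f ω - α * f ω := by
  by_cases h : p ω <;> simp [h, sub_mul]

section Indicator

variable {Ω : Type*} [MeasurableSpace Ω] {P : Measure Ω}

lemma MeasureTheory.Integrable.ite_sub_mul {p : Ω → Prop} [DecidablePred p]
    (hp : MeasurableSet {ω | p ω}) (α : ℝ) {f : Ω → ℝ} (hf : Integrable f P) :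
    Integrable (fun ω => ((if p ω then 1 else 0) - α) * f ω) P := by
  simp_rw [ite_sub_mul_eq_indicator_sub α f]
  exact (hf.indicator hp).sub (hf.const_mul α)

lemma integral_ite_sub_mul_const [IsProbabilityMeasure P] {p : Ω → Prop} [DecidablePred p]
    (hp : MeasurableSet {ω | p ω}) (α c : ℝ) :
    ∫ ω, ((if p ω then 1 else 0) - α) * c ∂P = ((P {ω | p ω}).toReal - α) * c := by
  simp_rw [ite_sub_mul_eq_indicator_sub α (fun _ => c)]
  rw [integral_sub ((integrable_const c).indicator hp) (integrable_const _),
    integral_indicator_const c hp, integral_const, measureReal_def]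
  simp
  ring

end Indicator

noncomputable def quantileScore (α : ℝ) (g : ℝ → ℝ) (a y : ℝ) : ℝ :=
  ((if y ≤ a then 1 else 0) - α) * (g a - g y)

section QuantileScore

variable {α : ℝ} {g : ℝ → ℝ}

lemma sub_mul_sub_le_quantileScore_sub_of_le (hg : Monotone g) {q a : ℝ} (hqa : q ≤ a) (y : ℝ) :
    ((if y ≤ q then 1 else 0) - α) * (g a - g q)
      ≤ quantileScore α g a y - quantileScore α g q y := by
  unfold quantileScore
  split_ifs <;> first
    | linarith
    | linarith [hg ‹y ≤ a›]

lemma sub_mul_sub_le_quantileScore_sub_of_ge (hg : Monotone g) {q a : ℝ} (haq : a ≤ q) (y : ℝ) :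
    ((if y < q then 1 else 0) - α) * (g a - g q)
      ≤ quantileScore α g a y - quantileScore α g q y := by
  unfold quantileScore
  split_ifs <;> first
    | linarith
    | linarith [hg (le_of_not_ge ‹¬y ≤ a›)]
    | linarith [hg ‹y ≤ q›, hg (le_of_not_gt ‹¬y < q›)]
    | linarith [hg ‹y ≤ a›, hg haq, hg ‹y ≤ q›, hg (le_of_not_gt ‹¬y < q›)]

variable {Ω : Type*} [MeasurableSpace Ω] {P : Measure Ω} [IsProbabilityMeasure P] {Y : Ω → ℝ}

lemma integrable_quantileScore (hY : Measurable Y) (hgY : Integrable (fun ω => g (Y ω)) P)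
    (a : ℝ) : Integrable (fun ω => quantileScore α g a (Y ω)) P :=
  ((integrable_const (g a)).sub hgY).ite_sub_mul (measurableSet_le hY measurable_const) α

lemma integral_quantileScore_le (hY : Measurable Y) (hg : Monotone g)
    (hgY : Integrable (fun ω => g (Y ω)) P) {q : ℝ} (hq : IsQuantile P Y α q) (a : ℝ) :
    ∫ ω, quantileScore α g q (Y ω) ∂P ≤ ∫ ω, quantileScore α g a (Y ω) ∂P := by
  have hscore (b : ℝ) : Integrable (fun ω => quantileScore α g b (Y ω)) P :=
    integrable_quantileScore hY hgY b
  have hdiff := (hscore a).sub (hscore q)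
  rw [← sub_nonneg, ← integral_sub (hscore a) (hscore q)]
  rcases le_total q a with hqa | haq
  · calc 0 ≤ ((P {ω | Y ω ≤ q}).toReal - α) * (g a - g q) :=
          mul_nonneg (sub_nonneg.2 hq.2) (sub_nonneg.2 (hg hqa))
      _ = ∫ ω, ((if Y ω ≤ q then 1 else 0) - α) * (g a - g q) ∂P :=
          (integral_ite_sub_mul_const (measurableSet_le hY measurable_const) α _).symm
      _ ≤ _ := integral_mono ((integrable_const _).ite_sub_mul
          (measurableSet_le hY measurable_const) α) hdiff
          fun ω => sub_mul_sub_le_quantileScore_sub_of_le hg hqa (Y ω)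
  · calc 0 ≤ ((P {ω | Y ω < q}).toReal - α) * (g a - g q) :=
          mul_nonneg_of_nonpos_of_nonpos (sub_nonpos.2 hq.1) (sub_nonpos.2 (hg haq))
      _ = ∫ ω, ((if Y ω < q then 1 else 0) - α) * (g a - g q) ∂P :=
          (integral_ite_sub_mul_const (measurableSet_lt hY measurable_const) α _).symm
      _ ≤ _ := integral_mono ((integrable_const _).ite_sub_mul
          (measurableSet_lt hY measurable_const) α) hdiff
          fun ω => sub_mul_sub_le_quantileScore_sub_of_ge hg haq (Y ω)

end QuantileScore

noncomputable def fzScore (α : ℝ) (G₁ G₂ G₂' : ℝ → ℝ) (a₁ a₂ y : ℝ) : ℝ :=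
  ((if y ≤ a₁ then (1:ℝ) else 0) - α) * (G₁ a₁ - G₁ y) - G₂ a₂ + G₂ y
    + G₂' a₂ * (a₂ + (1 - α)⁻¹ *
        (((if a₁ < y then (1:ℝ) else 0) - (1 - α)) * a₁
          - (if a₁ < y then (1:ℝ) else 0) * y))

section FisslerZiegel

variable {α : ℝ} {G₁ G₂ G₂' : ℝ → ℝ}

lemma fzScore_eq_quantileScore_add_excess (hα : α ≠ 1) (a₁ a₂ y : ℝ) :
    fzScore α G₁ G₂ G₂' a₁ a₂ y = quantileScore α G₁ a₁ y + (G₂ y - G₂ a₂)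
      + G₂' a₂ * (a₂ - a₁ - (1 - α)⁻¹ * max (y - a₁) 0) := by
  have : 1 - α ≠ 0 := sub_ne_zero.2 hα.symm
  unfold fzScore quantileScore
  rcases le_or_gt y a₁ with h | h
  · rw [if_pos h, if_neg h.not_gt, max_eq_right (sub_nonpos.2 h)]
    field_simp
    ring
  · rw [if_neg h.not_ge, if_pos h, max_eq_left (sub_nonneg.2 h.le)]
    field_simp
    ring

lemma fzScore_eq_quantileScore_tilt_add (hα : α ≠ 1) (a₁ a₂ y : ℝ) :
    fzScore α G₁ G₂ G₂' a₁ a₂ y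
      = quantileScore α (fun x => G₁ x - x / (1 - α) * G₂' a₂) a₁ y + (G₂ y - G₂ a₂)
        + G₂' a₂ * (a₂ - y) := by
  have : 1 - α ≠ 0 := sub_ne_zero.2 hα.symm
  unfold fzScore quantileScore
  rcases le_or_gt y a₁ with h | h
  · rw [if_pos h, if_neg h.not_gt]
    field_simp
    ring
  · rw [if_neg h.not_ge, if_pos h]
    field_simp
    ring

variable {Ω : Type*} [MeasurableSpace Ω] {P : Measure Ω} [IsProbabilityMeasure P] {Y : Ω → ℝ}

lemma integral_fzScore_eq_excess (hα : α ≠ 1) (hY : Measurable Y) (hYi : Integrable Y P)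
    (hG₁Y : Integrable (fun ω => G₁ (Y ω)) P) (hG₂Y : Integrable (fun ω => G₂ (Y ω)) P)
    (a₁ a₂ : ℝ) :
    ∫ ω, fzScore α G₁ G₂ G₂' a₁ a₂ (Y ω) ∂P
      = ∫ ω, quantileScore α G₁ a₁ (Y ω) ∂P + (∫ ω, G₂ (Y ω) ∂P - G₂ a₂)
        + G₂' a₂ * (a₂ - a₁ - (1 - α)⁻¹ * ∫ ω, max (Y ω - a₁) 0 ∂P) := by
  have hq : Integrable (fun ω => quantileScore α G₁ a₁ (Y ω)) P :=
    integrable_quantileScore hY hG₁Y a₁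
  have hG₂' : Integrable (fun ω => G₂ (Y ω) - G₂ a₂) P := hG₂Y.sub (integrable_const _)
  have hexcess : Integrable (fun ω => (1 - α)⁻¹ * max (Y ω - a₁) 0) P :=
    (hYi.sub (integrable_const a₁)).pos_part.const_mul _
  have hlin : Integrable (fun ω => G₂' a₂ * (a₂ - a₁ - (1 - α)⁻¹ * max (Y ω - a₁) 0)) P :=
    ((integrable_const _).sub hexcess).const_mul _
  have hsum : Integrable (fun ω => quantileScore α G₁ a₁ (Y ω) + (G₂ (Y ω) - G₂ a₂)) P :=
    hq.add hG₂'
  simp_rw [fzScore_eq_quantileScore_add_excess hα]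
  rw [integral_add hsum hlin, integral_add hq hG₂', integral_sub hG₂Y (integrable_const _),
    integral_const_mul, integral_sub (integrable_const _) hexcess, integral_const_mul]
  simp

lemma integral_fzScore_eq_tilt (hα : α ≠ 1) (hY : Measurable Y) (hYi : Integrable Y P)
    (hG₁Y : Integrable (fun ω => G₁ (Y ω)) P) (hG₂Y : Integrable (fun ω => G₂ (Y ω)) P)
    (a₁ a₂ : ℝ) :
    ∫ ω, fzScore α G₁ G₂ G₂' a₁ a₂ (Y ω) ∂P
      = ∫ ω, quantileScore α (fun x => G₁ x - x / (1 - α) * G₂' a₂) a₁ (Y ω) ∂P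
        + (∫ ω, G₂ (Y ω) ∂P - G₂ a₂) + G₂' a₂ * (a₂ - ∫ ω, Y ω ∂P) := by
  have hq : Integrable
      (fun ω => quantileScore α (fun x => G₁ x - x / (1 - α) * G₂' a₂) a₁ (Y ω)) P :=
    integrable_quantileScore hY (hG₁Y.sub ((hYi.div_const _).mul_const _)) a₁
  have hG₂' : Integrable (fun ω => G₂ (Y ω) - G₂ a₂) P := hG₂Y.sub (integrable_const _)
  have hlin : Integrable (fun ω => G₂' a₂ * (a₂ - Y ω)) P :=
    ((integrable_const _).sub hYi).const_mul _
  have hsum : Integrable (fun ω => quantileScore α (fun x => G₁ x - x / (1 - α) * G₂' a₂) a₁ (Y ω)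
      + (G₂ (Y ω) - G₂ a₂)) P := hq.add hG₂'
  simp_rw [fzScore_eq_quantileScore_tilt_add hα]
  rw [integral_add hsum hlin, integral_add hq hG₂', integral_sub hG₂Y (integrable_const _),
    integral_const_mul, integral_sub (integrable_const _) hYi]
  simp

end FisslerZiegel

theorem var_cvar_score_consistent_general {Ω : Type*} [MeasurableSpace Ω] (P : Measure Ω)
    [IsProbabilityMeasure P] (α : ℝ) (hα : α ∈ Set.Ioo (0:ℝ) 1)
    (Y : Ω → ℝ) (hYm : Measurable Y) (hY : Integrable Y P)
    (G₁ G₂ G₂' : ℝ → ℝ)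
    -- G₂ is convex with subgradient G₂'
    (hG₂ : ∀ x y : ℝ, G₂ x + G₂' x * (y - x) ≤ G₂ y)
    -- for every 𝔞₂, the map x ↦ G₁(x) − (x/(1−α)) G₂'(𝔞₂) is increasing
    (hG₁ : ∀ a₂ : ℝ, Monotone (fun x => G₁ x - x / (1 - α) * G₂' a₂))
    (hG₁Y : Integrable (fun ω => G₁ (Y ω)) P)
    (hG₂Y : Integrable (fun ω => G₂ (Y ω)) P)
    (S : ℝ → ℝ → ℝ → ℝ)
    (hS : ∀ a₁ a₂ y : ℝ, S a₁ a₂ y =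
      ((if y ≤ a₁ then (1:ℝ) else 0) - α) * (G₁ a₁ - G₁ y) - G₂ a₂ + G₂ y
        + G₂' a₂ * (a₂ + (1 - α)⁻¹ *
            (((if a₁ < y then (1:ℝ) else 0) - (1 - α)) * a₁
              - (if a₁ < y then (1:ℝ) else 0) * y))) :
    ∀ a₁ a₂ : ℝ, a₁ ≤ a₂ →
      ∫ ω, S (VaR P Y α) (CVaR P Y α) (Y ω) ∂P ≤ ∫ ω, S a₁ a₂ (Y ω) ∂P := by
  intro a₁ a₂ _
  obtain rfl : S = fzScore α G₁ G₂ G₂' := funext fun a₁ => funext fun a₂ => funext (hS a₁ a₂)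
  have hα₁ : α ≠ 1 := hα.2.ne
  have hCVaR := CVaR_eq hYm hY hα
  calc ∫ ω, fzScore α G₁ G₂ G₂' (VaR P Y α) (CVaR P Y α) (Y ω) ∂P
      = ∫ ω, quantileScore α G₁ (VaR P Y α) (Y ω) ∂P + (∫ ω, G₂ (Y ω) ∂P - G₂ (CVaR P Y α)) := by
        rw [integral_fzScore_eq_excess hα₁ hYm hY hG₁Y hG₂Y, hCVaR]
        ring
    _ ≤ ∫ ω, fzScore α G₁ G₂ G₂' (VaR P Y α) a₂ (Y ω) ∂P := by
        have hsubgrad := hG₂ a₂ (CVaR P Y α)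
        rw [integral_fzScore_eq_excess hα₁ hYm hY hG₁Y hG₂Y]
        rw [hCVaR] at hsubgrad ⊢
        linarith
    _ ≤ ∫ ω, fzScore α G₁ G₂ G₂' a₁ a₂ (Y ω) ∂P := by
        have hgY : Integrable (fun ω => G₁ (Y ω) - Y ω / (1 - α) * G₂' a₂) P :=
          hG₁Y.sub ((hY.div_const _).mul_const _)
        rw [integral_fzScore_eq_tilt hα₁ hYm hY hG₁Y hG₂Y,
          integral_fzScore_eq_tilt hα₁ hYm hY hG₁Y hG₂Y]
        gcongr ?_ + _ + _
        exact integral_quantileScore_le hYm (hG₁ a₂) hgY (isQuantile_VaR hYm hα) a₁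

/-- The Fissler–Ziegel scoring function is consistent for the pair `(VaR_α, CVaR_α)`. -/
theorem var_cvar_score_consistent {Ω : Type*} [MeasurableSpace Ω] (P : Measure Ω)
    [IsProbabilityMeasure P] (α : ℝ) (hα : α ∈ Set.Ioo (0:ℝ) 1)
    (Y : Ω → ℝ) (hYm : Measurable Y) (hY : Integrable Y P)
    (huniq : ∃! q : ℝ, IsQuantile P Y α q)
    (G₁ G₂ G₂' : ℝ → ℝ)
    -- G₂ is convex with subgradient G₂'
    (hG₂ : ∀ x y : ℝ, G₂ x + G₂' x * (y - x) ≤ G₂ y)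
    -- for every 𝔞₂, the map x ↦ G₁(x) − (x/(1−α)) G₂'(𝔞₂) is increasing
    (hG₁ : ∀ a₂ : ℝ, Monotone (fun x => G₁ x - x / (1 - α) * G₂' a₂))
    (hG₁Y : Integrable (fun ω => G₁ (Y ω)) P)
    (hG₂Y : Integrable (fun ω => G₂ (Y ω)) P)
    (S : ℝ → ℝ → ℝ → ℝ)
    (hS : ∀ a₁ a₂ y : ℝ, S a₁ a₂ y =
      ((if y ≤ a₁ then (1:ℝ) else 0) - α) * (G₁ a₁ - G₁ y) - G₂ a₂ + G₂ y
        + G₂' a₂ * (a₂ + (1 - α)⁻¹ *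
            (((if a₁ < y then (1:ℝ) else 0) - (1 - α)) * a₁
              - (if a₁ < y then (1:ℝ) else 0) * y))) :
    ∀ a₁ a₂ : ℝ, a₁ ≤ a₂ →
      ∫ ω, S (VaR P Y α) (CVaR P Y α) (Y ω) ∂P ≤ ∫ ω, S a₁ a₂ (Y ω) ∂P :=
  var_cvar_score_consistent_general P α hα Y hYm hY G₁ G₂ G₂' hG₂ hG₁ hG₁Y hG₂Y S hS
end
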